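/- arXiv:1502.07981 — 10 statements merged into one kernel-verified Lean document; each statement's English description precedes it below -/
import Mathlib

section
/- As permutations of X^ℕ one has ab⁻¹ = bc⁻¹ = ca⁻¹; denoting this common element by α, α maps x₁x₂x₃… to σ(x₁)σ(x₂)σ(x₃)…, where σ is the 3-cycle (1 3 2) of X, and in particular α³ = 1. Moreover α⁻¹ = ac⁻¹ = ba⁻¹ = cb⁻¹, and also a⁻¹b = b⁻¹c = c⁻¹a and a⁻¹c = b⁻¹a = c⁻¹b. -/
/-!
We formalize the automaton `A` of the paper: alphabet `X = {1,2,3}` is encoded as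
`Fin 3` (letter `i+1` ↦ `i`), states `a, b, c` are encoded as `0, 1, 2 : Fin 3`.
Each state induces a permutation of the space `ℕ → Fin 3` of infinite sequences.

Note on conventions: in the paper, products of tree automorphisms compose
left-to-right (in a word `s₁s₂⋯sₙ`, the letter `s₁` acts first); in Mathlib,
`(f * g) w = f (g w)`, i.e. the right factor acts first.  Hence a paper word
`uv` is rendered as the Lean product `v * u`; e.g. the paper's `α = ab⁻¹`
(apply `a`, then `b⁻¹`) is `b⁻¹ * a` below.
-/

namespace Lamplighter

section Generic

variable {S X : Type*}

/-- The state of the automaton after reading the first `n` letters of `w`, starting at `s`. -/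
def run (nxt : S → X → S) (s : S) (w : ℕ → X) : ℕ → S
  | 0 => s
  | n + 1 => nxt (run nxt s w n) (w n)

/-- The output sequence of the automaton started in state `s` reading `w`. -/
def fwd (nxt : S → X → S) (out : S → Equiv.Perm X) (s : S) (w : ℕ → X) : ℕ → X :=
  fun n => out (run nxt s w n) (w n)

/-- Transition function of the inverse automaton. -/
def invNxt (nxt : S → X → S) (out : S → Equiv.Perm X) (s : S) (y : X) : S :=
  nxt s ((out s).symm y)

/-- The action of the inverse automaton, started at state `s`. -/
def bwd (nxt : S → X → S) (out : S → Equiv.Perm X) (s : S) (y : ℕ → X) : ℕ → X :=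
  fun n => (out (run (invNxt nxt out) s y n)).symm (y n)

theorem run_inv_fwd (nxt : S → X → S) (out : S → Equiv.Perm X) (s : S) (w : ℕ → X) :
    ∀ n, run (invNxt nxt out) s (fwd nxt out s w) n = run nxt s w n := by
  intro n
  induction n with
  | zero => rfl
  | succ n ih => simp [run, ih, invNxt, fwd]

theorem run_bwd (nxt : S → X → S) (out : S → Equiv.Perm X) (s : S) (y : ℕ → X) :
    ∀ n, run nxt s (bwd nxt out s y) n = run (invNxt nxt out) s y n := by
  intro n
  induction n with
  | zero => rfl
  | succ n ih => simp [run, ih, bwd, invNxt]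

/-- The permutation of the space of infinite sequences induced by state `s`
of an invertible automaton. -/
def statePerm (nxt : S → X → S) (out : S → Equiv.Perm X) (s : S) : Equiv.Perm (ℕ → X) where
  toFun := fwd nxt out s
  invFun := bwd nxt out s
  left_inv := fun w => funext fun n => by simp [bwd, run_inv_fwd, fwd]
  right_inv := fun y => funext fun n => by simp [fwd, run_bwd, bwd]

end Generic

/-- The alphabet `X = {1,2,3}`, encoded as `Fin 3`. -/
abbrev X3 := Fin 3

/-- Transition function of the automaton `A` (states `a = 0`, `b = 1`, `c = 2`):
from `a`: `1 ↦ a, 2 ↦ b, 3 ↦ c`; from `b`: `1 ↦ c, 2 ↦ a, 3 ↦ b`;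
from `c`: `1 ↦ b, 2 ↦ c, 3 ↦ a`. -/
def nxtA : Fin 3 → X3 → Fin 3 := ![![0, 1, 2], ![2, 0, 1], ![1, 2, 0]]

/-- Output permutations of the automaton `A`: state `a` acts on letters as the
transposition `(2 3)`, state `b` as `(1 3)`, state `c` as `(1 2)`. -/
def outA : Fin 3 → Equiv.Perm X3 := ![Equiv.swap 1 2, Equiv.swap 0 2, Equiv.swap 0 1]

/-- The permutation of `X^ℕ` given by state `a`. -/
def a : Equiv.Perm (ℕ → X3) := statePerm nxtA outA 0

/-- The permutation of `X^ℕ` given by state `b`. -/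
def b : Equiv.Perm (ℕ → X3) := statePerm nxtA outA 1

/-- The permutation of `X^ℕ` given by state `c`. -/
def c : Equiv.Perm (ℕ → X3) := statePerm nxtA outA 2

/-- The group `G_A` generated by the automaton `A`. -/
def GA : Subgroup (Equiv.Perm (ℕ → X3)) := Subgroup.closure {a, b, c}

/-- The element `α = ab⁻¹` of the paper (first apply `a`, then `b⁻¹`). -/
def α : Equiv.Perm (ℕ → X3) := b⁻¹ * a

/-- The set `W` of permutations acting coordinatewise by a sequence of even
permutations of the alphabet. -/
def W : Set (Equiv.Perm (ℕ → X3)) :=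
  {g | ∃ π : ℕ → Equiv.Perm X3, (∀ n, Equiv.Perm.sign (π n) = 1) ∧
    ∀ (w : ℕ → X3) (n : ℕ), g w n = π n (w n)}

/-- The subgroup `N` generated by the conjugates `a⁻ⁿ α aⁿ`, `n ∈ ℤ`
(in Lean's composition order: `aⁿ * α * a⁻ⁿ`). -/
def N : Subgroup (Equiv.Perm (ℕ → X3)) :=
  Subgroup.closure {g | ∃ n : ℤ, g = a ^ n * α * a ^ (-n)}

/-!
Relabelling the states cyclically `a → b → c → a` and the letters by `σ` maps `A` to itself, so
each state acts as `σ` letterwise followed by the next state: `a = b P`, `b = c P`, `c = a P`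
(Lean order) with `P` the letterwise action of `σ`. All identities, including `P ^ 3 = 1`, are
then consequences of these three relations in an arbitrary group.
-/

section SelfSimilar

variable {S X : Type*} {nxt : S → X → S} {out : S → Equiv.Perm X}

theorem run_comp_of_equivariant (ρ : S → S) (σ : Equiv.Perm X)
    (hnxt : ∀ s x, nxt (ρ s) (σ x) = ρ (nxt s x)) (s : S) (w : ℕ → X) :
    ∀ n, run nxt (ρ s) (σ ∘ w) n = ρ (run nxt s w n)
  | 0 => rfl
  | n + 1 => by rw [run, run, run_comp_of_equivariant ρ σ hnxt s w n, Function.comp_apply, hnxt]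

theorem statePerm_eq_mul_piCongrRight (ρ : S → S) (σ : Equiv.Perm X)
    (hnxt : ∀ s x, nxt (ρ s) (σ x) = ρ (nxt s x)) (hout : ∀ s x, out (ρ s) (σ x) = out s x)
    (s : S) :
    statePerm nxt out s = statePerm nxt out (ρ s) * Equiv.piCongrRight fun _ => σ := by
  ext w n
  change out (run nxt s w n) (w n) = out (run nxt (ρ s) (σ ∘ w) n) (σ (w n))
  rw [run_comp_of_equivariant ρ σ hnxt, hout]

end SelfSimilar

section CyclicQuotients

variable {G : Type*} [Group G] {a b c p : G}

theorem pow_three_eq_one_of_cyclic (ha : a = b * p) (hb : b = c * p) (hc : c = a * p) :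
    p ^ 3 = 1 := by
  have h : a * p ^ 3 = a := by
    calc a * p ^ 3 = a * p * p * p := by rw [pow_three', ← mul_assoc, ← mul_assoc]
      _ = a := by rw [← hc, ← hb, ← ha]
  exact mul_eq_left.mp h

theorem mul_inv_eq_mul_inv_of_inv_mul_eq (h : a⁻¹ * b = b⁻¹ * c) : b * a⁻¹ = c * b⁻¹ := by
  rw [eq_mul_inv_iff_mul_eq, mul_assoc, h, mul_inv_cancel_left]

end CyclicQuotients

theorem nxtA_add_one : ∀ s x, nxtA (s + 1) ((finRotate 3).symm x) = nxtA s x + 1 := by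
  decide

theorem outA_add_one : ∀ s x, outA (s + 1) ((finRotate 3).symm x) = outA s x := by
  decide

/-- As permutations of `X^ℕ`: `ab⁻¹ = bc⁻¹ = ca⁻¹`; this common
element `α` maps `x₁x₂x₃…` to `σ(x₁)σ(x₂)σ(x₃)…` where `σ` is the 3-cycle `(1 3 2)`
of the alphabet (in the `Fin 3` encoding, `σ = (finRotate 3).symm`), so `α³ = 1`.
Moreover `α⁻¹ = ac⁻¹ = ba⁻¹ = cb⁻¹`, `a⁻¹b = b⁻¹c = c⁻¹a`, and `a⁻¹c = b⁻¹a = c⁻¹b`.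
(Paper words compose left-to-right, so e.g. `ab⁻¹` is `b⁻¹ * a` in Lean.) -/
theorem alpha_identities :
    b⁻¹ * a = c⁻¹ * b ∧ c⁻¹ * b = a⁻¹ * c ∧
    (∀ (w : ℕ → X3) (n : ℕ), α w n = (finRotate 3).symm (w n)) ∧
    α ^ 3 = 1 ∧
    α⁻¹ = c⁻¹ * a ∧ c⁻¹ * a = a⁻¹ * b ∧ a⁻¹ * b = b⁻¹ * c ∧
    b * a⁻¹ = c * b⁻¹ ∧ c * b⁻¹ = a * c⁻¹ ∧
    c * a⁻¹ = a * b⁻¹ ∧ a * b⁻¹ = b * c⁻¹ := by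
  have hself : ∀ s, statePerm nxtA outA s =
      statePerm nxtA outA (s + 1) * Equiv.piCongrRight fun _ => (finRotate 3).symm :=
    statePerm_eq_mul_piCongrRight (· + 1) _ nxtA_add_one outA_add_one
  have ha : a = b * _ := hself 0
  have hb : b = c * _ := hself 1
  have hc : c = a * _ := hself 2
  have e₁ := inv_mul_eq_of_eq_mul ha
  have e₂ := inv_mul_eq_of_eq_mul hb
  have e₃ := inv_mul_eq_of_eq_mul hc
  have hα : α = _ := e₁
  have f₁ : a⁻¹ * b = α⁻¹ := by rw [hα, ← e₁, mul_inv_rev, inv_inv]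
  have f₂ : b⁻¹ * c = α⁻¹ := by rw [hα, ← e₂, mul_inv_rev, inv_inv]
  have f₃ : c⁻¹ * a = α⁻¹ := by rw [hα, ← e₃, mul_inv_rev, inv_inv]
  have g₁ := mul_inv_eq_mul_inv_of_inv_mul_eq (f₁.trans f₂.symm)
  have g₂ := mul_inv_eq_mul_inv_of_inv_mul_eq (f₂.trans f₃.symm)
  refine ⟨e₁.trans e₂.symm, e₂.trans e₃.symm, fun w n => by rw [hα]; rfl,
    hα ▸ pow_three_eq_one_of_cyclic ha hb hc, f₃.symm, f₃.trans f₁.symm, f₁.trans f₂.symm,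
    g₁, g₂, ?_, ?_⟩
  · rw [← inv_inj, mul_inv_rev, inv_inv, mul_inv_rev, inv_inv, g₁, g₂]
  · rw [← inv_inj, mul_inv_rev, inv_inv, mul_inv_rev, inv_inv, g₁]

end Lamplighter
end

section
/- G_A is generated by the two elements a and α, i.e., the subgroup of the permutation group of X^ℕ generated by {a, α} equals G_A. -/
/-!
We formalize the automaton `A` of the paper: alphabet `X = {1,2,3}` is encoded as
`Fin 3` (letter `i+1` ↦ `i`), states `a, b, c` are encoded as `0, 1, 2 : Fin 3`.
Each state induces a permutation of the space `ℕ → Fin 3` of infinite sequences.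

Note on conventions: in the paper, products of tree automorphisms compose
left-to-right (in a word `s₁s₂⋯sₙ`, the letter `s₁` acts first); in Mathlib,
`(f * g) w = f (g w)`, i.e. the right factor acts first.  Hence a paper word
`uv` is rendered as the Lean product `v * u`; e.g. the paper's `α = ab⁻¹`
(apply `a`, then `b⁻¹`) is `b⁻¹ * a` below.
-/

namespace Lamplighter

section Generic

variable {S T X : Type*}

/-- `(nxt₁, out₁)` acts first, `(nxt₂, out₂)` reads its output. -/
def compNxt (nxt₁ : S → X → S) (out₁ : S → Equiv.Perm X) (nxt₂ : T → X → T) :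
    S × T → X → S × T :=
  fun p x => (nxt₁ p.1 x, nxt₂ p.2 (out₁ p.1 x))

def compOut (out₁ : S → Equiv.Perm X) (out₂ : T → Equiv.Perm X) : S × T → Equiv.Perm X :=
  fun p => out₂ p.2 * out₁ p.1

theorem statePerm_inv (nxt : S → X → S) (out : S → Equiv.Perm X) (s : S) :
    (statePerm nxt out s)⁻¹ = statePerm (invNxt nxt out) (fun s => (out s)⁻¹) s := by
  ext w n
  rfl

theorem run_compNxt (nxt₁ : S → X → S) (out₁ : S → Equiv.Perm X) (nxt₂ : T → X → T)
    (s : S) (t : T) (w : ℕ → X) (n : ℕ) :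
    run (compNxt nxt₁ out₁ nxt₂) (s, t) w n =
      (run nxt₁ s w n, run nxt₂ t (fwd nxt₁ out₁ s w) n) := by
  induction n with
  | zero => rfl
  | succ n ih => simp only [run, ih, compNxt, fwd]

theorem statePerm_mul (nxt₁ : S → X → S) (out₁ : S → Equiv.Perm X) (nxt₂ : T → X → T)
    (out₂ : T → Equiv.Perm X) (s : S) (t : T) :
    statePerm nxt₂ out₂ t * statePerm nxt₁ out₁ s =
      statePerm (compNxt nxt₁ out₁ nxt₂) (compOut out₁ out₂) (s, t) := by
  ext w n
  simp only [Equiv.Perm.mul_apply, statePerm, Equiv.coe_fn_mk, fwd, run_compNxt, compOut]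

theorem statePerm_eq_of_bisim (nxt₁ : S → X → S) (out₁ : S → Equiv.Perm X)
    (nxt₂ : T → X → T) (out₂ : T → Equiv.Perm X) (R : S → T → Prop)
    (hR : ∀ s t, R s t → out₁ s = out₂ t ∧ ∀ x, R (nxt₁ s x) (nxt₂ t x))
    {s : S} {t : T} (hst : R s t) :
    statePerm nxt₁ out₁ s = statePerm nxt₂ out₂ t := by
  have hrun (w : ℕ → X) (n : ℕ) : R (run nxt₁ s w n) (run nxt₂ t w n) := by
    induction n with
    | zero => exact hst
    | succ n ih => exact (hR _ _ ih).2 (w n)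
  ext w n
  exact congrArg (· (w n)) (hR _ _ (hrun w n)).1

end Generic

/-- The states of the composite automaton of `a * b⁻¹ * a` reachable from `(a, b⁻¹, a)`,
each paired with the state of `A` it simulates. -/
def bisimAC : List ((Fin 3 × Fin 3 × Fin 3) × Fin 3) :=
  [((0, 1, 0), 2), ((0, 1, 2), 1), ((1, 2, 0), 2),
   ((1, 2, 1), 0), ((2, 0, 1), 0), ((2, 0, 2), 1)]

theorem c_eq_a_mul_inv_b_mul_a : c = a * b⁻¹ * a := by
  rw [a, b, c, statePerm_inv, statePerm_mul, statePerm_mul]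
  exact statePerm_eq_of_bisim _ _ _ _ (fun t p => (p, t) ∈ bisimAC) (by decide) (by decide)

/-- `G_A` is generated by the two elements `a` and `α`. -/
theorem GA_eq_closure_a_alpha :
    Subgroup.closure {a, α} = GA := by
  have hb : b = a * α⁻¹ := by rw [α]; group
  have hc : c = a * α := by rw [c_eq_a_mul_inv_b_mul_a, α]; group
  have ha_GA : a ∈ GA := Subgroup.subset_closure (by simp)
  have hb_GA : b ∈ GA := Subgroup.subset_closure (by simp)
  set H := Subgroup.closure {a, α}
  have ha_H : a ∈ H := Subgroup.subset_closure (by simp)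
  have hα_H : α ∈ H := Subgroup.subset_closure (by simp)
  refine Subgroup.closure_eq_of_le _ ?_ ?_
  · simp only [Set.insert_subset_iff, Set.singleton_subset_iff, SetLike.mem_coe]
    exact ⟨ha_GA, mul_mem (inv_mem hb_GA) ha_GA⟩
  · rw [GA, Subgroup.closure_le]
    simp only [Set.insert_subset_iff, Set.singleton_subset_iff, SetLike.mem_coe, hb, hc]
    exact ⟨ha_H, mul_mem ha_H (inv_mem hα_H), mul_mem ha_H hα_H⟩

end Lamplighter
end

section
/- For every g ∈ W and all x, y ∈ {a, b, c}, the permutations x⁻¹gy and xgy⁻¹ belong to W. -/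
/-!
We formalize the automaton `A` of the paper: alphabet `X = {1,2,3}` is encoded as
`Fin 3` (letter `i+1` ↦ `i`), states `a, b, c` are encoded as `0, 1, 2 : Fin 3`.
Each state induces a permutation of the space `ℕ → Fin 3` of infinite sequences.

Note on conventions: in the paper, products of tree automorphisms compose
left-to-right (in a word `s₁s₂⋯sₙ`, the letter `s₁` acts first); in Mathlib,
`(f * g) w = f (g w)`, i.e. the right factor acts first.  Hence a paper word
`uv` is rendered as the Lean product `v * u`; e.g. the paper's `α = ab⁻¹`
(apply `a`, then `b⁻¹`) is `b⁻¹ * a` below.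
-/

namespace Lamplighter

/-!
Identify the alphabet and the states with `ℤ/3`: state `s` reads `x`, writes `2s - x` and moves
to `x - s`. The even permutations of `ℤ/3` are its translations, so `W` consists of the
coordinatewise translations `w ↦ w + k`. Run state `s` on `w + k` and state `r` on `w`: the
difference `d` of the two state sequences satisfies `d₀ = s - r`, `dₙ₊₁ = kₙ - dₙ`, whatever `w`
is, and the two outputs then differ by the translation `2d - k`. So `y (w + k) = x w + (2d - k)`
for `x, y ∈ {a, b, c}`, which gives `y g x⁻¹ ∈ W`; running the recursion for `d` with a
prescribed output translation gives `y⁻¹ g x ∈ W`.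
-/

lemma sign_eq_one_iff_eq_addRight (π : Equiv.Perm (Fin 3)) :
    Equiv.Perm.sign π = 1 ↔ ∃ k, π = Equiv.addRight k := by
  revert π; decide

lemma mem_W_iff {g : Equiv.Perm (ℕ → X3)} : g ∈ W ↔ ∃ k : ℕ → X3, ∀ w, g w = w + k := by
  constructor
  · rintro ⟨π, hπ, hg⟩
    choose k hk using fun n => (sign_eq_one_iff_eq_addRight (π n)).1 (hπ n)
    exact ⟨k, fun w => funext fun n => by rw [hg, hk]; rfl⟩
  · rintro ⟨k, hg⟩
    exact ⟨fun n => Equiv.addRight (k n), fun n => (sign_eq_one_iff_eq_addRight _).2 ⟨_, rfl⟩,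
      fun w n => by rw [hg]; rfl⟩

lemma nxtA_apply (s x : Fin 3) : nxtA s x = x - s := by revert s x; decide

lemma outA_apply (s z : Fin 3) : outA s z = 2 * s - z := by revert s z; decide

lemma exists_eq_statePerm_of_mem {x : Equiv.Perm (ℕ → X3)}
    (hx : x ∈ ({a, b, c} : Set (Equiv.Perm (ℕ → X3)))) : ∃ s, x = statePerm nxtA outA s := by
  rcases hx with rfl | rfl | rfl
  exacts [⟨0, rfl⟩, ⟨1, rfl⟩, ⟨2, rfl⟩]

open Fin.CommRing

section Translation

variable {s r : Fin 3} {w k d : ℕ → X3}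

lemma run_nxtA_add (hd₀ : d 0 = s - r) (hd : ∀ n, d (n + 1) = k n - d n) (n : ℕ) :
    run nxtA s (w + k) n = run nxtA r w n + d n := by
  induction n with
  | zero => simp [run, hd₀]
  | succ n ih =>
    simp only [run, ih, nxtA_apply, hd, Pi.add_apply]
    ring

lemma statePerm_apply_add (hd₀ : d 0 = s - r) (hd : ∀ n, d (n + 1) = k n - d n) :
    statePerm nxtA outA s (w + k) = statePerm nxtA outA r w + (2 * d - k) := by
  funext n
  simp only [statePerm, Equiv.coe_fn_mk, fwd, run_nxtA_add hd₀ hd, outA_apply, Pi.add_apply,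
    Pi.sub_apply, Pi.mul_apply, Pi.ofNat_apply]
  ring

end Translation

/-- For every `g ∈ W` and all `x, y ∈ {a, b, c}`, the permutations
`x⁻¹gy` and `xgy⁻¹` belong to `W`.  (Paper words compose left-to-right, so the
paper's `x⁻¹gy` is `y * g * x⁻¹` in Lean, and `xgy⁻¹` is `y⁻¹ * g * x`.) -/
theorem conj_mem_W :
    ∀ g ∈ W, ∀ x ∈ ({a, b, c} : Set (Equiv.Perm (ℕ → X3))),
      ∀ y ∈ ({a, b, c} : Set (Equiv.Perm (ℕ → X3))),
        y * g * x⁻¹ ∈ W ∧ y⁻¹ * g * x ∈ W := by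
  rintro g hg x hx y hy
  obtain ⟨k, hk⟩ := mem_W_iff.1 hg
  obtain ⟨r, rfl⟩ := exists_eq_statePerm_of_mem hx
  obtain ⟨s, rfl⟩ := exists_eq_statePerm_of_mem hy
  constructor
  · let d : ℕ → X3 := fun n => Nat.rec (s - r) (fun m e => k m - e) n
    refine mem_W_iff.2 ⟨2 * d - k, fun w => ?_⟩
    rw [Equiv.Perm.mul_apply, Equiv.Perm.mul_apply, hk,
      statePerm_apply_add (d := d) rfl (fun _ => rfl), Equiv.Perm.coe_inv, Equiv.apply_symm_apply]
  · -- `d` is chosen so that `k' := 2d - k` satisfies `dₙ₊₁ = k'ₙ - dₙ`,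
    -- whence `y (w + k') = x w + k`
    let d : ℕ → X3 := fun n => Nat.rec (s - r) (fun m e => e - k m) n
    have hd (n : ℕ) : d (n + 1) = (2 * d - k) n - d n :=
      show d n - k n = 2 * d n - k n - d n by ring
    refine mem_W_iff.2 ⟨2 * d - k, fun w => ?_⟩
    rw [Equiv.Perm.mul_apply, Equiv.Perm.mul_apply, hk, Equiv.Perm.inv_eq_iff_eq,
      statePerm_apply_add rfl hd, sub_sub_cancel]

end Lamplighter
end

section
/- For every g ∈ W the following equalities hold as permutations of X^ℕ: a⁻¹ga = b⁻¹gb = c⁻¹gc, a⁻¹gb = b⁻¹gc = c⁻¹ga, and a⁻¹gc = b⁻¹ga = c⁻¹gb. -/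
/-!
We formalize the automaton `A` of the paper: alphabet `X = {1,2,3}` is encoded as
`Fin 3` (letter `i+1` ↦ `i`), states `a, b, c` are encoded as `0, 1, 2 : Fin 3`.
Each state induces a permutation of the space `ℕ → Fin 3` of infinite sequences.

Note on conventions: in the paper, products of tree automorphisms compose
left-to-right (in a word `s₁s₂⋯sₙ`, the letter `s₁` acts first); in Mathlib,
`(f * g) w = f (g w)`, i.e. the right factor acts first.  Hence a paper word
`uv` is rendered as the Lean product `v * u`; e.g. the paper's `α = ab⁻¹`
(apply `a`, then `b⁻¹`) is `b⁻¹ * a` below.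
-/

namespace Lamplighter

/-!
The automaton is symmetric under renaming its states cyclically `a → b → c → a` while rotating
the alphabet by `x ↦ x + 1`: state `s + 1` acts as state `s` after the coordinatewise rotation
`ρ : w ↦ w + 1`. The even permutations of a three-letter alphabet are exactly its rotations, so
every `g ∈ W` commutes with `ρ`, and therefore
`(s + 1) * g * (t + 1)⁻¹ = s * ρ * g * ρ⁻¹ * t⁻¹ = s * g * t⁻¹`.
-/

lemma nxtA_add_one_s4 : ∀ (r : Fin 3) (x : X3), nxtA (r + 1) x = nxtA r (x + 1) + 1 := by
  decide

lemma outA_add_one_s4 : ∀ (r : Fin 3) (x : X3), outA (r + 1) x = outA r (x + 1) := by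
  decide

lemma run_nxtA_add_one (s : Fin 3) (w : ℕ → X3) (n : ℕ) :
    run nxtA (s + 1) w n = run nxtA s (w + 1) n + 1 := by
  induction n with
  | zero => rfl
  | succ n ih => simp only [run, ih, nxtA_add_one_s4, Pi.add_apply, Pi.one_apply]

lemma statePerm_add_one (s : Fin 3) :
    statePerm nxtA outA (s + 1) = statePerm nxtA outA s * Equiv.addRight 1 := by
  ext w n
  simp only [statePerm, fwd, Equiv.coe_fn_mk, Equiv.Perm.coe_mul, Function.comp_apply,
    Equiv.coe_addRight, run_nxtA_add_one, outA_add_one_s4, Pi.add_apply, Pi.one_apply]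

lemma apply_add_one_of_sign_eq_one :
    ∀ π : Equiv.Perm (Fin 3), Equiv.Perm.sign π = 1 → ∀ x, π (x + 1) = π x + 1 := by
  decide

lemma commute_addRight_one_of_mem_W {g : Equiv.Perm (ℕ → X3)} (hg : g ∈ W) :
    Commute g (Equiv.addRight 1) := by
  obtain ⟨π, hsign, hπ⟩ := hg
  ext w n
  simp only [Equiv.Perm.coe_mul, Function.comp_apply, Equiv.coe_addRight, hπ, Pi.add_apply,
    Pi.one_apply, apply_add_one_of_sign_eq_one (π n) (hsign n)]

lemma statePerm_add_one_conj {g : Equiv.Perm (ℕ → X3)} (hg : g ∈ W) (s t : Fin 3) :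
    statePerm nxtA outA (s + 1) * g * (statePerm nxtA outA (t + 1))⁻¹ =
      statePerm nxtA outA s * g * (statePerm nxtA outA t)⁻¹ := by
  rw [statePerm_add_one, statePerm_add_one, mul_inv_rev, mul_assoc _ (Equiv.addRight 1),
    (commute_addRight_one_of_mem_W hg).symm.eq]
  group

/-- For every `g ∈ W`: `a⁻¹ga = b⁻¹gb = c⁻¹gc`,
`a⁻¹gb = b⁻¹gc = c⁻¹ga`, and `a⁻¹gc = b⁻¹ga = c⁻¹gb`.  (Paper words compose
left-to-right, so the paper's `x⁻¹gy` is `y * g * x⁻¹` in Lean.) -/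
theorem conj_equalities :
    ∀ g ∈ W,
      (a * g * a⁻¹ = b * g * b⁻¹ ∧ b * g * b⁻¹ = c * g * c⁻¹) ∧
      (b * g * a⁻¹ = c * g * b⁻¹ ∧ c * g * b⁻¹ = a * g * c⁻¹) ∧
      (c * g * a⁻¹ = a * g * b⁻¹ ∧ a * g * b⁻¹ = b * g * c⁻¹) := by
  intro g hg
  have h := statePerm_add_one_conj hg
  exact ⟨⟨(h 0 0).symm, (h 1 1).symm⟩, ⟨(h 1 0).symm, (h 2 1).symm⟩,
    ⟨(h 2 0).symm, (h 0 1).symm⟩⟩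

end Lamplighter
end

section
/- For every n ∈ ℕ, the stabilizer in G_A of the word 1ⁿ (the letter 1 repeated n times) acts transitively on the set {1ⁿx : x ∈ X}: for every x ∈ X there exists g ∈ G_A with g(1ⁿ) = 1ⁿ and g(1ⁿ1) = 1ⁿx. -/
/-!
We formalize the automaton `A` of the paper: alphabet `X = {1,2,3}` is encoded as
`Fin 3` (letter `i+1` ↦ `i`), states `a, b, c` are encoded as `0, 1, 2 : Fin 3`.
Each state induces a permutation of the space `ℕ → Fin 3` of infinite sequences.

Note on conventions: in the paper, products of tree automorphisms compose
left-to-right (in a word `s₁s₂⋯sₙ`, the letter `s₁` acts first); in Mathlib,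
`(f * g) w = f (g w)`, i.e. the right factor acts first.  Hence a paper word
`uv` is rendered as the Lean product `v * u`; e.g. the paper's `α = ab⁻¹`
(apply `a`, then `b⁻¹`) is `b⁻¹ * a` below.
-/

namespace Lamplighter

/-!
The automaton `A` is affine over `𝔽₃`: in state `s` reading `x` it outputs `2s + 2x` and moves
to state `2s + x`. Feeding it a translated input `w + t` therefore shifts its states by a
sequence depending only on `t`, and its outputs by another one, `L t`. This makes `b⁻¹a` the
translation by the constant sequence `2`, and makes conjugation by `a` send the translation by
`t` to the translation by `L t`; so the translations lying in `G_A` form a group closed under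
`L`. If `t` vanishes below `n`, then `L t + t` vanishes up to `n` and has `(n+1)`-st coordinate
`-tₙ`, so starting from the constant sequences one reaches translations that vanish below `n`
with any prescribed `n`-th coordinate. Such a translation fixes `1ⁿ` and sends `1ⁿ1` to `1ⁿx`.
-/

section Affine

variable {R : Type*} [CommRing R] (k j l m : R)

def stateShift (e : R) (t : ℕ → R) : ℕ → R
  | 0 => e
  | n + 1 => k * stateShift e t n + j * t n

def outputShift (e : R) (t : ℕ → R) : ℕ → R :=
  fun n => l * stateShift k j e t n + m * t n

theorem stateShift_zero_eq_zero {t : ℕ → R} {n : ℕ} (ht : ∀ i < n, t i = 0) :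
    ∀ i ≤ n, stateShift k j 0 t i = 0 := by
  intro i hi
  induction i with
  | zero => rfl
  | succ i ih => rw [stateShift, ih (by omega), ht i (by omega), mul_zero, mul_zero, add_zero]

variable {k j l m} {nxt : R → R → R} {out : R → Equiv.Perm R}

theorem run_add (hnxt : ∀ s x, nxt s x = k * s + j * x) (s e : R) (w t : ℕ → R) (n : ℕ) :
    run nxt (s + e) (w + t) n = run nxt s w n + stateShift k j e t n := by
  induction n with
  | zero => rfl
  | succ n ih =>
    simp only [run, stateShift, ih, hnxt, Pi.add_apply]
    ring

theorem statePerm_add_mul_addRight (hnxt : ∀ s x, nxt s x = k * s + j * x)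
    (hout : ∀ s x, out s x = l * s + m * x) (s e : R) (t : ℕ → R) :
    statePerm nxt out (s + e) * Equiv.addRight t =
      Equiv.addRight (outputShift k j l m e t) * statePerm nxt out s := by
  ext w n
  change out (run nxt (s + e) (w + t) n) (w n + t n) =
    out (run nxt s w n) (w n) + (l * stateShift k j e t n + m * t n)
  rw [run_add hnxt, hout, hout]
  ring

end Affine

open Fin.CommRing

theorem nxtA_eq (s x : X3) : nxtA s x = 2 * s + 1 * x := by
  revert s x; decide

theorem outA_eq (s x : X3) : outA s x = 2 * s + 2 * x := by
  revert s x; decide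

abbrev shiftA : (ℕ → X3) → ℕ → X3 := outputShift 2 1 2 2 0

theorem a_mul_addRight (t : ℕ → X3) : a * Equiv.addRight t = Equiv.addRight (shiftA t) * a := by
  have h := statePerm_add_mul_addRight nxtA_eq outA_eq 0 0 t
  rwa [add_zero] at h

theorem stateShift_const_two (n : ℕ) : stateShift (2 : X3) 1 1 (fun _ => 2) n = 1 := by
  induction n with
  | zero => rfl
  | succ n ih => rw [stateShift, ih]; decide

-- Started in `b = a + 1` on input `w + 2`, the state offset `1` is fixed by `e ↦ 2e + 2`
-- and shifts the output by `2·1 + 2·2 = 0`.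
theorem b_mul_addRight_two : b * Equiv.addRight (fun _ => 2) = a := by
  have h := statePerm_add_mul_addRight nxtA_eq outA_eq 0 1 (fun _ => 2)
  have hshift : outputShift (2 : X3) 1 2 2 1 (fun _ => 2) = 0 := by
    funext n
    rw [outputShift, stateShift_const_two]
    rfl
  rwa [hshift, Equiv.addRight_zero, one_mul, zero_add] at h

theorem a_mem_GA : a ∈ GA := Subgroup.subset_closure (by simp)

theorem b_mem_GA : b ∈ GA := Subgroup.subset_closure (by simp)

theorem addRight_const_mem_GA (x : X3) : Equiv.addRight (fun _ : ℕ => x) ∈ GA := by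
  have two : Equiv.addRight (fun _ : ℕ => (2 : X3)) ∈ GA := by
    rw [show Equiv.addRight (fun _ : ℕ => (2 : X3)) = b⁻¹ * a by rw [← b_mul_addRight_two]; group]
    exact mul_mem (inv_mem b_mem_GA) a_mem_GA
  obtain rfl | rfl | rfl : x = 0 ∨ x = 1 ∨ x = 2 := by revert x; decide
  · rw [show (fun _ : ℕ => (0 : X3)) = 0 from rfl, Equiv.addRight_zero]
    exact GA.one_mem
  · rw [show (fun _ : ℕ => (1 : X3)) = (fun _ => 2) + (fun _ => 2) from rfl, Equiv.addRight_add]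
    exact mul_mem two two
  · exact two

theorem addRight_shiftA_add_mem_GA {t : ℕ → X3} (ht : Equiv.addRight t ∈ GA) :
    Equiv.addRight (shiftA t + t) ∈ GA := by
  have hconj : Equiv.addRight (shiftA t) = a * Equiv.addRight t * a⁻¹ := by
    rw [a_mul_addRight]; group
  rw [Equiv.addRight_add, hconj]
  exact mul_mem ht (mul_mem (mul_mem a_mem_GA ht) (inv_mem a_mem_GA))

theorem shiftA_add_eq_zero {t : ℕ → X3} {n : ℕ} (ht : ∀ i < n, t i = 0) :
    ∀ i ≤ n, (shiftA t + t) i = 0 := by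
  intro i hi
  have h0 := stateShift_zero_eq_zero (2 : X3) 1 ht i hi
  simp only [Pi.add_apply, outputShift, h0]
  generalize t i = y
  revert y; decide

theorem shiftA_add_succ {t : ℕ → X3} {n : ℕ} (ht : ∀ i < n, t i = 0) :
    (shiftA t + t) (n + 1) = -t n := by
  have h0 := stateShift_zero_eq_zero (2 : X3) 1 ht n le_rfl
  simp only [Pi.add_apply, outputShift, stateShift, h0]
  generalize t n = y
  generalize t (n + 1) = z
  revert y z; decide

theorem exists_addRight_mem_GA (n : ℕ) (x : X3) :
    ∃ t : ℕ → X3, Equiv.addRight t ∈ GA ∧ (∀ i < n, t i = 0) ∧ t n = x := by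
  induction n generalizing x with
  | zero => exact ⟨fun _ => x, addRight_const_mem_GA x, by simp, rfl⟩
  | succ n ih =>
    obtain ⟨t, ht, hzero, hn⟩ := ih (-x)
    refine ⟨shiftA t + t, addRight_shiftA_add_mem_GA ht,
      fun i hi => shiftA_add_eq_zero hzero i (by omega), ?_⟩
    rw [shiftA_add_succ hzero, hn, neg_neg]

/-- For every `n`, the stabilizer of the word `1ⁿ` in `G_A` acts
transitively on `{1ⁿx : x ∈ X}`: for every letter `x` there is `g ∈ G_A` with
`g(1ⁿ) = 1ⁿ` and `g(1ⁿ1) = 1ⁿx`.  (The letter `1` is `0 : Fin 3`.) -/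
theorem stabilizer_transitive_below :
    ∀ (n : ℕ) (x : X3), ∃ g ∈ GA,
      (∀ w : ℕ → X3, (∀ i < n, w i = 0) → ∀ i < n, g w i = 0) ∧
      (∀ w : ℕ → X3, (∀ i ≤ n, w i = 0) → (∀ i < n, g w i = 0) ∧ g w n = x) := by
  intro n x
  obtain ⟨t, ht, hzero, hn⟩ := exists_addRight_mem_GA n x
  refine ⟨Equiv.addRight t, ht, fun w hw i hi => ?_, fun w hw => ⟨fun i hi => ?_, ?_⟩⟩
  · simp [hw i hi, hzero i hi]
  · simp [hw i hi.le, hzero i hi]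
  · simp [hw n le_rfl, hn]

end Lamplighter
end

section
/- For any two words w and w' of the same length over the state set {a, b, c}, there exists a finite word v over X such that the section w|_v equals w' (as words over {a, b, c}). -/
/-!
We formalize the automaton `A` of the paper: alphabet `X = {1,2,3}` is encoded as
`Fin 3` (letter `i+1` ↦ `i`), states `a, b, c` are encoded as `0, 1, 2 : Fin 3`.
Each state induces a permutation of the space `ℕ → Fin 3` of infinite sequences.

Note on conventions: in the paper, products of tree automorphisms compose
left-to-right (in a word `s₁s₂⋯sₙ`, the letter `s₁` acts first); in Mathlib,
`(f * g) w = f (g w)`, i.e. the right factor acts first.  Hence a paper word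
`uv` is rendered as the Lean product `v * u`; e.g. the paper's `α = ab⁻¹`
(apply `a`, then `b⁻¹`) is `b⁻¹ * a` below.
-/

namespace Lamplighter

/-- The section of a word over the states `{a, b, c}` (a list over `Fin 3`) at a
single letter `x`: the section of `s₁s₂…sₙ` at `x` is `s₁|ₓ` followed by the
section of `s₂…sₙ` at the letter `s₁(x)`. -/
def wordSec : List (Fin 3) → X3 → List (Fin 3)
  | [], _ => []
  | s :: t, x => nxtA s x :: wordSec t (outA s x)

/-- The section `w|_v` of a word over the states at a finite word `v` over the
alphabet, obtained by iterating `wordSec`. -/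
def secAt (w : List (Fin 3)) (v : List X3) : List (Fin 3) :=
  v.foldl wordSec w

/-!
Identify states and letters with `ℤ/3` (`a, b, c` and `1, 2, 3` as `0, 1, 2`). The state
`p` reading `x` moves to `x - p` and outputs `-p - x`; so a state `p` that is made to output
the word `y` ends in the state `p - Σ y`, while the rest of the word reads `y`. Hence, by
induction on the length, one first moves the tail `t` of `s :: t` to the target tail `t'`,
and then corrects the head by a loop at `t'` with prescribed letter sum. Such a loop goes
from `t'` to `c aⁿ⁻¹`, which the letter `1` fixes, reads that letter as often as needed,
and returns to `t'`.
-/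

theorem secAt_cons (w : List (Fin 3)) (x : X3) (v : List X3) :
    secAt w (x :: v) = secAt (wordSec w x) v := rfl

theorem secAt_append (w : List (Fin 3)) (u v : List X3) :
    secAt w (u ++ v) = secAt (secAt w u) v := List.foldl_append ..

theorem nxtA_outA_symm (p y : Fin 3) : nxtA p ((outA p).symm y) = p - y := by
  revert p y; decide

/-- The preimage of the finite word `y` under the state `p`. -/
def stateInvApply : Fin 3 → List X3 → List X3
  | _, [] => []
  | p, y :: ys => (outA p).symm y :: stateInvApply (nxtA p ((outA p).symm y)) ys

theorem secAt_cons_stateInvApply (y : List X3) (p : Fin 3) (t : List (Fin 3)) :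
    secAt (p :: t) (stateInvApply p y) = (p - y.sum) :: secAt t y := by
  induction y generalizing p t with
  | nil => simp [stateInvApply, secAt]
  | cons y ys ih =>
    rw [stateInvApply, secAt_cons, wordSec, nxtA_outA_symm, Equiv.apply_symm_apply, ih,
      ← secAt_cons, List.sum_cons, sub_sub]

/-- The word `c aⁿ⁻¹` of length `n`. -/
def fixedWord : ℕ → List (Fin 3)
  | 0 => []
  | n + 1 => 2 :: List.replicate n 0

theorem length_fixedWord (n : ℕ) : (fixedWord n).length = n := by
  cases n <;> simp [fixedWord]

theorem wordSec_replicate_zero (n : ℕ) :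
    wordSec (List.replicate n 0) 0 = List.replicate n 0 := by
  induction n with
  | zero => rfl
  | succ n ih => exact congrArg (0 :: ·) ih

theorem wordSec_fixedWord (n : ℕ) : wordSec (fixedWord n) 1 = fixedWord n := by
  cases n with
  | zero => rfl
  | succ n => exact congrArg (2 :: ·) (wordSec_replicate_zero n)

theorem secAt_fixedWord_replicate (n k : ℕ) :
    secAt (fixedWord n) (List.replicate k 1) = fixedWord n := by
  induction k with
  | zero => rfl
  | succ k ih => rw [List.replicate_succ, secAt_cons, wordSec_fixedWord, ih]

theorem sum_replicate_val_one (m : Fin 3) : (List.replicate m.val (1 : X3)).sum = m := by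
  revert m; decide

theorem exists_secAt_eq_self_sum_eq {n : ℕ}
    (htrans : ∀ w w' : List (Fin 3), w.length = n → w'.length = n → ∃ v, secAt w v = w')
    (t : List (Fin 3)) (ht : t.length = n) (k : Fin 3) :
    ∃ v : List X3, secAt t v = t ∧ v.sum = k := by
  obtain ⟨u, hu⟩ := htrans t (fixedWord n) ht (length_fixedWord n)
  obtain ⟨u', hu'⟩ := htrans (fixedWord n) t (length_fixedWord n) ht
  refine ⟨u ++ List.replicate (k - u.sum - u'.sum).val 1 ++ u', ?_, ?_⟩
  · rw [secAt_append, secAt_append, hu, secAt_fixedWord_replicate, hu']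
  · rw [List.sum_append, List.sum_append, sum_replicate_val_one]
    abel

theorem exists_secAt_eq_of_length_eq (n : ℕ) :
    ∀ w w' : List (Fin 3), w.length = n → w'.length = n → ∃ v, secAt w v = w' := by
  induction n with
  | zero =>
    intro w w' hw hw'
    exact ⟨[], by simp_all [secAt]⟩
  | succ n ih =>
    rintro (_ | ⟨s, t⟩) (_ | ⟨s', t'⟩) hw hw' <;> simp only [List.length_cons,
      List.length_nil, Nat.add_right_cancel_iff, reduceCtorEq] at hw hw'
    obtain ⟨y, hy⟩ := ih t t' hw hw'
    obtain ⟨l, hl, hsum⟩ := exists_secAt_eq_self_sum_eq ih t' hw' (s - y.sum - s')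
    refine ⟨stateInvApply s y ++ stateInvApply (s - y.sum) l, ?_⟩
    rw [secAt_append, secAt_cons_stateInvApply, hy, secAt_cons_stateInvApply, hl, hsum,
      sub_sub_cancel]

/-- Any word of length `n` over `{a, b, c}` is a section of any
other word of length `n`: for words `w, w'` of equal length there is a finite
word `v` over the alphabet with `w|_v = w'`. -/
theorem section_transitive :
    ∀ w w' : List (Fin 3), w.length = w'.length →
      ∃ v : List X3, secAt w v = w' := fun w w' h =>
  exists_secAt_eq_of_length_eq w.length w w' rfl h.symm

end Lamplighter
end

section
/- The semigroup generated by a, b, c is free of rank 3: the monoid homomorphism from the free monoid on three generators to the permutation group of X^ℕ sending the three generators to a, b, c respectively is injective. -/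
/-!
We formalize the automaton `A` of the paper: alphabet `X = {1,2,3}` is encoded as
`Fin 3` (letter `i+1` ↦ `i`), states `a, b, c` are encoded as `0, 1, 2 : Fin 3`.
Each state induces a permutation of the space `ℕ → Fin 3` of infinite sequences.

Note on conventions: in the paper, products of tree automorphisms compose
left-to-right (in a word `s₁s₂⋯sₙ`, the letter `s₁` acts first); in Mathlib,
`(f * g) w = f (g w)`, i.e. the right factor acts first.  Hence a paper word
`uv` is rendered as the Lean product `v * u`; e.g. the paper's `α = ab⁻¹`
(apply `a`, then `b⁻¹`) is `b⁻¹ * a` below.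
-/

namespace Lamplighter

/-! Read letters and states as elements of `ZMod 3`: state `s` then moves to `x - s` on input
`x` and outputs `-x - s`. On generating functions `F = ∑ wₙ Xⁿ` this says that state `s` is the
affine map `F ↦ ((X - 1) F - s) / (1 + X)`, so a word of length `k` acts by
`F ↦ ((X - 1) / (1 + X))ᵏ F + P / (1 + X)ᵏ` for a polynomial `P` computed recursively from the
word. Two words acting alike have the same linear part, hence the same length (`1` is a root of
multiplicity exactly `k` of `(X - 1)ᵏ (1 + X)ᵐ`), and the same polynomial `P`; evaluating `P`
at `1` reads off the outermost letter, and cancelling it recovers the rest. -/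

section Polynomial

open Polynomial

variable {R : Type*} [CommRing R]

lemma rootMultiplicity_one_X_sub_one_pow_mul_one_add_X_pow [IsDomain R] (h2 : (2 : R) ≠ 0)
    (k m : ℕ) : rootMultiplicity 1 ((X - 1) ^ k * (1 + X) ^ m : R[X]) = k := by
  have hroot : ¬ ((1 + X) ^ m : R[X]).IsRoot 1 := by
    simpa [one_add_one_eq_two] using pow_ne_zero m h2
  have hne : ((X - 1) ^ k * (1 + X) ^ m : R[X]) ≠ 0 :=
    mul_ne_zero (pow_ne_zero _ (by simpa using X_sub_C_ne_zero (1 : R)))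
      fun h ↦ hroot (by simp [h])
  rw [rootMultiplicity_mul hne, rootMultiplicity_eq_zero hroot, add_zero,
    ← C_1, rootMultiplicity_X_sub_C_pow]

noncomputable def wordPoly : List R → R[X]
  | [] => 0
  | s :: u => (X - 1) * wordPoly u - C s * (1 + X) ^ u.length

lemma wordPoly_injective [IsDomain R] (h2 : (2 : R) ≠ 0) :
    ∀ {u v : List R}, u.length = v.length → wordPoly u = wordPoly v → u = v
  | [], [], _, _ => rfl
  | s :: u, t :: v, hlen, h => by
    have hlen' : u.length = v.length := Nat.succ.inj hlen
    rw [wordPoly, wordPoly, hlen'] at h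
    have hst : s = t := by
      have h1 := congrArg (eval 1) h
      simp only [eval_sub, eval_mul, eval_pow, eval_add, eval_one, eval_X, eval_C, sub_self,
        zero_mul, zero_sub, neg_inj, one_add_one_eq_two] at h1
      exact mul_right_cancel₀ (pow_ne_zero _ h2) h1
    subst hst
    have huv : wordPoly u = wordPoly v :=
      mul_left_cancel₀ (by simpa using X_sub_C_ne_zero (1 : R)) (sub_left_inj.mp h)
    rw [wordPoly_injective h2 hlen' huv]

end Polynomial

section Automaton

open PowerSeries

lemma mk_coeff {R : Type*} [Semiring R] (f : R⟦X⟧) : mk (coeff · f) = f := by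
  ext; simp

-- `ZMod 3` is definitionally `Fin 3`; these are the transition and output maps of `A` over it.
abbrev nxtZ : ZMod 3 → ZMod 3 → ZMod 3 := nxtA
abbrev outZ : ZMod 3 → Equiv.Perm (ZMod 3) := outA

lemma nxtZ_apply (s x : ZMod 3) : nxtZ s x = x - s := by revert s x; decide

lemma outZ_apply (s x : ZMod 3) : outZ s x = -x - s := by revert s x; decide

lemma one_add_X_mul_mk_statePerm (s : ZMod 3) (w : ℕ → ZMod 3) :
    (1 + X) * mk (statePerm nxtZ outZ s w) = (X - 1) * mk w - C s := by
  ext (_ | n)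
  · simp [statePerm, fwd, run, outZ_apply]
  · -- the states cancel in consecutive outputs, leaving `-w (n + 1) - 2 w n = w n - w (n + 1)`
    have h3 : (3 : ZMod 3) = 0 := rfl
    simp only [statePerm, Equiv.coe_fn_mk, fwd, run, nxtZ_apply, outZ_apply, coeff_mk,
      add_mul, sub_mul, one_mul, map_add, map_sub, coeff_succ_X_mul, coeff_succ_C, sub_zero]
    linear_combination (-w n) * h3

lemma one_add_X_pow_mul_mk_lift (u : List (ZMod 3)) (w : ℕ → ZMod 3) :
    (1 + X) ^ u.length * mk (FreeMonoid.lift (statePerm nxtZ outZ) (FreeMonoid.ofList u) w)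
      = (X - 1) ^ u.length * mk w + (wordPoly u : (ZMod 3)⟦X⟧) := by
  induction u generalizing w with
  | nil => simp [wordPoly]
  | cons s u ih =>
    rw [FreeMonoid.ofList_cons, map_mul, FreeMonoid.lift_eval_of, Equiv.Perm.mul_apply,
      List.length_cons, pow_succ, mul_assoc, one_add_X_mul_mk_statePerm, wordPoly]
    push_cast
    linear_combination (X - 1) * ih w

lemma length_eq_of_lift_eq {u v : List (ZMod 3)}
    (h : FreeMonoid.lift (statePerm nxtZ outZ) (FreeMonoid.ofList u) =
      FreeMonoid.lift (statePerm nxtZ outZ) (FreeMonoid.ofList v)) :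
    u.length = v.length := by
  -- comparing the images of the sequences with generating functions `1` and `0` isolates the
  -- linear part `((X - 1) / (1 + X)) ^ length`
  have hu₁ := one_add_X_pow_mul_mk_lift u (coeff · 1)
  have hu₀ := one_add_X_pow_mul_mk_lift u (coeff · 0)
  have hv₁ := one_add_X_pow_mul_mk_lift v (coeff · 1)
  have hv₀ := one_add_X_pow_mul_mk_lift v (coeff · 0)
  rw [h] at hu₁ hu₀
  simp only [mk_coeff, mul_one, mul_zero, zero_add] at hu₁ hu₀ hv₁ hv₀
  have hseries : ((X - 1) ^ u.length * (1 + X) ^ v.length : (ZMod 3)⟦X⟧)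
      = (X - 1) ^ v.length * (1 + X) ^ u.length := by
    linear_combination (1 + X) ^ u.length * (hv₁ - hv₀) - (1 + X) ^ v.length * (hu₁ - hu₀)
  have hpoly :
      ((Polynomial.X - 1) ^ u.length * (1 + Polynomial.X) ^ v.length : Polynomial (ZMod 3))
        = (Polynomial.X - 1) ^ v.length * (1 + Polynomial.X) ^ u.length :=
    Polynomial.coe_inj.mp (by push_cast; exact hseries)
  have h2 : (2 : ZMod 3) ≠ 0 := by decide
  simpa only [rootMultiplicity_one_X_sub_one_pow_mul_one_add_X_pow h2] using
    congrArg (Polynomial.rootMultiplicity 1) hpoly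

lemma wordPoly_eq_of_lift_eq {u v : List (ZMod 3)}
    (h : FreeMonoid.lift (statePerm nxtZ outZ) (FreeMonoid.ofList u) =
      FreeMonoid.lift (statePerm nxtZ outZ) (FreeMonoid.ofList v))
    (hlen : u.length = v.length) :
    wordPoly u = wordPoly v := by
  have hu := one_add_X_pow_mul_mk_lift u (coeff · 0)
  have hv := one_add_X_pow_mul_mk_lift v (coeff · 0)
  rw [h, hlen] at hu
  simp only [mk_coeff, mul_zero, zero_add] at hu hv
  exact_mod_cast hu.symm.trans hv

end Automaton

lemma lift_statePerm_injective : Function.Injective (FreeMonoid.lift (statePerm nxtZ outZ)) := by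
  intro x y h
  rw [← FreeMonoid.ofList_toList x, ← FreeMonoid.ofList_toList y] at h
  have hlen := length_eq_of_lift_eq h
  exact FreeMonoid.toList.injective
    (wordPoly_injective (by decide : (2 : ZMod 3) ≠ 0) hlen (wordPoly_eq_of_lift_eq h hlen))

lemma generators_eq_statePerm :
    (![a, b, c] : Fin 3 → Equiv.Perm (ℕ → X3)) = statePerm nxtZ outZ := by
  funext s
  fin_cases s <;> rfl

/-- The semigroup generated by `a, b, c` is free of rank 3:
the monoid homomorphism from the free monoid on three generators to the
permutation group of `X^ℕ` sending the generators to `a, b, c` is injective. -/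
theorem free_semigroup :
    Function.Injective (FreeMonoid.lift (![a, b, c] : Fin 3 → Equiv.Perm (ℕ → X3))) := by
  rw [generators_eq_statePerm]
  exact lift_statePerm_injective

end Lamplighter
end

section
/- The element a has infinite order in G_A: aⁿ is not the identity permutation of X^ℕ for every integer n ≥ 1. -/
/-!
We formalize the automaton `A` of the paper: alphabet `X = {1,2,3}` is encoded as
`Fin 3` (letter `i+1` ↦ `i`), states `a, b, c` are encoded as `0, 1, 2 : Fin 3`.
Each state induces a permutation of the space `ℕ → Fin 3` of infinite sequences.

Note on conventions: in the paper, products of tree automorphisms compose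
left-to-right (in a word `s₁s₂⋯sₙ`, the letter `s₁` acts first); in Mathlib,
`(f * g) w = f (g w)`, i.e. the right factor acts first.  Hence a paper word
`uv` is rendered as the Lean product `v * u`; e.g. the paper's `α = ab⁻¹`
(apply `a`, then `b⁻¹`) is `b⁻¹ * a` below.
-/

namespace Lamplighter

/-! Read letters as elements of `𝔽₃` and a sequence `w` as the power series `φ w` with these
coefficients. State `s` of `A` acts on the current letter as `x ↦ κ s - x` and then moves to a
state with constant `-(κ s + x)`; this makes `(1 + X) φ (s w) = (X - 1) φ w + κ s`.
As `κ a = 0`, `aⁿ = 1` would force `(1 + X)ⁿ = (X - 1)ⁿ`, which fails at `X = 1`. -/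

open PowerSeries

def κ : Fin 3 → ZMod 3 := ![0, 2, 1]

lemma outA_val (s : Fin 3) (x : X3) : ((outA s x).val : ZMod 3) = κ s - x.val := by
  revert s x; decide

lemma κ_nxtA (s : Fin 3) (x : X3) : κ (nxtA s x) = -(κ s + x.val) := by
  revert s x; decide

noncomputable def digitSeries (w : ℕ → X3) : (ZMod 3)⟦X⟧ :=
  mk fun n => ((w n).val : ZMod 3)

lemma coeff_digitSeries_statePerm (s : Fin 3) (w : ℕ → X3) (n : ℕ) :
    coeff n (digitSeries (statePerm nxtA outA s w)) =
      κ (run nxtA s w n) - coeff n (digitSeries w) := by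
  simp only [digitSeries, coeff_mk]
  exact outA_val _ _

theorem one_add_X_mul_digitSeries_statePerm (s : Fin 3) (w : ℕ → X3) :
    (1 + X) * digitSeries (statePerm nxtA outA s w) = (X - 1) * digitSeries w + C (κ s) := by
  ext n
  rcases n with _ | n
  · have h0 := coeff_digitSeries_statePerm s w 0
    simp only [run, coeff_zero_eq_constantCoeff] at h0
    simp [add_mul, h0, sub_eq_neg_add]
  · have hrun : κ (run nxtA s w (n + 1)) = -(κ (run nxtA s w n) + coeff n (digitSeries w)) := by
      simpa [digitSeries, run] using κ_nxtA (run nxtA s w n) (w n)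
    have h3 : (3 : ZMod 3) = 0 := rfl
    simp only [add_mul, sub_mul, one_mul, map_add, map_sub, coeff_succ_X_mul,
      coeff_digitSeries_statePerm, hrun, coeff_C, Nat.succ_ne_zero, if_false, add_zero]
    linear_combination (-coeff n (digitSeries w)) * h3

theorem one_add_X_mul_digitSeries_a (w : ℕ → X3) :
    (1 + X) * digitSeries (a w) = (X - 1) * digitSeries w := by
  simpa [a, κ] using one_add_X_mul_digitSeries_statePerm 0 w

theorem one_add_X_pow_mul_digitSeries_a_pow (n : ℕ) (w : ℕ → X3) :
    (1 + X) ^ n * digitSeries ((a ^ n) w) = (X - 1) ^ n * digitSeries w := by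
  induction n generalizing w with
  | zero => simp
  | succ n ih =>
    calc (1 + X) ^ (n + 1) * digitSeries ((a ^ (n + 1)) w)
        = (1 + X) ^ n * ((1 + X) * digitSeries (a ((a ^ n) w))) := by
          rw [pow_succ' a, Equiv.Perm.mul_apply, pow_succ, mul_assoc]
      _ = (X - 1) * ((1 + X) ^ n * digitSeries ((a ^ n) w)) := by
          rw [one_add_X_mul_digitSeries_a]; ring
      _ = (X - 1) ^ (n + 1) * digitSeries w := by rw [ih, pow_succ']; ring

theorem one_add_X_pow_ne_X_sub_one_pow {R : Type*} [CommRing R] [NoZeroDivisors R]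
    (h2 : (2 : R) ≠ 0) {n : ℕ} (hn : n ≠ 0) : (1 + X : R⟦X⟧) ^ n ≠ (X - 1) ^ n := by
  intro h
  have hpoly : (1 + Polynomial.X : Polynomial R) ^ n = (Polynomial.X - 1) ^ n := by
    rw [← Polynomial.coe_inj]
    simpa using h
  have hev := congrArg (Polynomial.eval 1) hpoly
  simp only [Polynomial.eval_pow, Polynomial.eval_add, Polynomial.eval_sub, Polynomial.eval_one,
    Polynomial.eval_X, sub_self, zero_pow hn, one_add_one_eq_two] at hev
  exact pow_ne_zero n h2 hev

lemma digitSeries_single_zero_one : digitSeries (Pi.single 0 1) = 1 := by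
  ext (_ | n) <;> simp [digitSeries, coeff_one]

/-- The element `a` has infinite order: `aⁿ ≠ 1` for all `n ≥ 1`. -/
theorem a_infinite_order :
    ∀ n : ℕ, 1 ≤ n → a ^ n ≠ 1 := by
  intro n hn h
  apply one_add_X_pow_ne_X_sub_one_pow (by decide : (2 : ZMod 3) ≠ 0) (n := n) (by omega)
  simpa [h, digitSeries_single_zero_one] using
    one_add_X_pow_mul_digitSeries_a_pow n (Pi.single 0 1)

end Lamplighter
end

section
/- G_A admits the presentation ⟨x, y | y³, [x⁻ⁿyxⁿ, x⁻ᵐyxᵐ] (n, m ∈ ℤ)⟩: the homomorphism from the free group on two generators x, y to G_A sending x ↦ a and y ↦ α is surjective, and its kernel equals the normal closure of the set {y³} ∪ {[x⁻ⁿyxⁿ, x⁻ᵐyxᵐ] : n, m ∈ ℤ}. -/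
/-!
Read a sequence `w` over `ℤ/3` as the power series `∑ wₙ Xⁿ`. Then the state `a` acts as
multiplication by the unit `u = (X - 1) / (1 + X)`, and every state `s` is `a` composed with
translation by the constant sequence `s`; so `α` is translation by the constant sequence `2`, and
`G_A = ⟨a, α⟩` consists of affine maps. In the presented group every element is `m xᵏ` with `m` in
the abelian subgroup generated by the conjugates `x⁻ⁿyxⁿ`, which is a quotient of `⊕_ℤ ℤ/3`. These
conjugates are sent to the translations by `u⁻ⁿ c`, which are linearly independent over `ℤ/3`
because the non-constant power series `u` is transcendental; for the same reason `a` has infinite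
order. Hence the presented group maps injectively onto `G_A`.
-/

open scoped commutatorElement

section Lamps

variable {G : Type*} [Group G]

def lamp (x y : G) (n : ℤ) : G := x ^ (-n) * y * x ^ n

lemma map_lamp {H : Type*} [Group H] (f : G →* H) (x y : G) (n : ℤ) :
    f (lamp x y n) = lamp (f x) (f y) n := by
  simp only [lamp, map_mul, map_zpow]

lemma lamp_pow (x y : G) (n : ℤ) (k : ℕ) : lamp x y n ^ k = lamp x (y ^ k) n := by
  simpa only [lamp, zpow_neg, inv_inv] using conj_pow (a := x ^ (-n)) (b := y) (i := k)

lemma zpow_mul_lamp_mul_zpow_neg (x y : G) (k n : ℤ) :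
    x ^ k * lamp x y n * x ^ (-k) = lamp x y (n - k) := by
  simp only [lamp]
  group

def lampSubgroup (x y : G) : Subgroup G := Subgroup.closure (Set.range (lamp x y))

lemma lamp_mem_lampSubgroup (x y : G) (n : ℤ) : lamp x y n ∈ lampSubgroup x y :=
  Subgroup.subset_closure ⟨n, rfl⟩

lemma zpow_mul_mul_zpow_neg_mem_lampSubgroup (x y : G) (k : ℤ) {m : G}
    (hm : m ∈ lampSubgroup x y) : x ^ k * m * x ^ (-k) ∈ lampSubgroup x y := by
  have hconj := Subgroup.mem_map_of_mem (MulAut.conj (x ^ k)).toMonoidHom hm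
  rw [lampSubgroup, MonoidHom.map_closure] at hconj
  rw [zpow_neg]
  refine Subgroup.closure_mono ?_ hconj
  rintro _ ⟨_, ⟨n, rfl⟩, rfl⟩
  exact ⟨n - k, by rw [← zpow_mul_lamp_mul_zpow_neg x y k n, zpow_neg]; rfl⟩

lemma mem_normalizer_lampSubgroup (x y : G) :
    x ∈ Subgroup.normalizer (lampSubgroup x y : Set G) := by
  refine Subgroup.mem_normalizer_iff.2 fun m => ⟨fun hm => ?_, fun hm => ?_⟩
  · simpa using zpow_mul_mul_zpow_neg_mem_lampSubgroup x y 1 hm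
  · simpa [mul_assoc] using zpow_mul_mul_zpow_neg_mem_lampSubgroup x y (-1) hm

lemma exists_eq_mul_zpow_of_closure_eq_top (x y : G) (hgen : Subgroup.closure {x, y} = ⊤)
    (g : G) : ∃ m ∈ lampSubgroup x y, ∃ k : ℤ, g = m * x ^ k := by
  have hle : Subgroup.zpowers x ≤ Subgroup.normalizer (lampSubgroup x y : Set G) :=
    Subgroup.zpowers_le.2 (mem_normalizer_lampSubgroup x y)
  have htop : lampSubgroup x y ⊔ Subgroup.zpowers x = ⊤ := by
    rw [eq_top_iff, ← hgen, Subgroup.closure_le, Set.insert_subset_iff, Set.singleton_subset_iff]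
    exact ⟨Subgroup.mem_sup_right (Subgroup.mem_zpowers x),
      Subgroup.mem_sup_left (by simpa [lamp] using lamp_mem_lampSubgroup x y 0)⟩
  have hg : g ∈ ((lampSubgroup x y ⊔ Subgroup.zpowers x : Subgroup G) : Set G) := by
    simp [htop]
  rw [Subgroup.coe_mul_of_right_le_normalizer_left _ _ hle] at hg
  obtain ⟨m, hm, _, ⟨k, rfl⟩, rfl⟩ := hg
  exact ⟨m, hm, k, rfl⟩

end Lamps

def lamplighterRels (p : ℕ) : Set (FreeGroup (Fin 2)) :=
  {w | w = FreeGroup.of (1 : Fin 2) ^ p ∨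
    ∃ n m : ℤ, w = ⁅lamp (FreeGroup.of (0 : Fin 2)) (FreeGroup.of 1) n,
      lamp (FreeGroup.of (0 : Fin 2)) (FreeGroup.of 1) m⁆}

abbrev PresentedLamplighter (p : ℕ) := PresentedGroup (lamplighterRels p)

namespace PresentedLamplighter

noncomputable section

open scoped IsMulCommutative

variable {p : ℕ}

def x : PresentedLamplighter p := PresentedGroup.of 0

def y : PresentedLamplighter p := PresentedGroup.of 1

lemma closure_x_y : Subgroup.closure {x, y} = (⊤ : Subgroup (PresentedLamplighter p)) := by
  rw [← PresentedGroup.closure_range_of]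
  congr 1
  ext
  simp [Fin.exists_fin_two, eq_comm, x, y]

lemma y_pow : (y : PresentedLamplighter p) ^ p = 1 :=
  (map_pow _ _ _).symm.trans (PresentedGroup.one_of_mem (Or.inl rfl))

lemma commute_lamp (n m : ℤ) :
    Commute (lamp x y n) (lamp (x : PresentedLamplighter p) y m) := by
  rw [← commutatorElement_eq_one_iff_commute]
  have h := PresentedGroup.one_of_mem (rels := lamplighterRels p) (Or.inr ⟨n, m, rfl⟩)
  rwa [map_commutatorElement, map_lamp, map_lamp] at h

instance : IsMulCommutative (lampSubgroup (x : PresentedLamplighter p) y) :=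
  Subgroup.isMulCommutative_closure (by rintro _ ⟨n, rfl⟩ _ ⟨m, rfl⟩; exact commute_lamp n m)

def lampGen (n : ℤ) : lampSubgroup (x : PresentedLamplighter p) y :=
  ⟨lamp x y n, lamp_mem_lampSubgroup x y n⟩

lemma lampGen_pow (n : ℤ) : (lampGen n : lampSubgroup (x : PresentedLamplighter p) y) ^ p = 1 :=
  Subtype.ext (by rw [Subgroup.coe_pow, lampGen, lamp_pow, y_pow]; simp [lamp])

def lampHom : (ℤ →₀ ZMod p) →+ Additive (PresentedLamplighter p) :=
  (lampSubgroup x y).subtype.toAdditive.comp <| Finsupp.liftAddHom fun n =>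
    ZMod.lift p ⟨zmultiplesHom _ (.ofMul (lampGen n)), by simp [← ofMul_pow, lampGen_pow]⟩

lemma lampHom_single (n k : ℤ) :
    (lampHom (Finsupp.single n (k : ZMod p))).toMul = lamp x y n ^ k := by
  simp [lampHom, lampGen]

lemma exists_lampHom_eq {g : PresentedLamplighter p} (hg : g ∈ lampSubgroup x y) :
    ∃ t, (lampHom t).toMul = g := by
  induction hg using Subgroup.closure_induction with
  | mem _ h =>
    obtain ⟨n, rfl⟩ := h
    exact ⟨Finsupp.single n 1, by simpa using lampHom_single n 1⟩
  | one => exact ⟨0, by simp⟩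
  | mul _ _ _ _ h₁ h₂ =>
    obtain ⟨t₁, rfl⟩ := h₁
    obtain ⟨t₂, rfl⟩ := h₂
    exact ⟨t₁ + t₂, by simp⟩
  | inv _ _ h =>
    obtain ⟨t, rfl⟩ := h
    exact ⟨-t, by simp⟩

lemma exists_eq_lampHom_mul_zpow (g : PresentedLamplighter p) :
    ∃ (t : ℤ →₀ ZMod p) (k : ℤ), g = (lampHom t).toMul * x ^ k := by
  obtain ⟨m, hm, k, rfl⟩ := exists_eq_mul_zpow_of_closure_eq_top x y closure_x_y g
  obtain ⟨t, rfl⟩ := exists_lampHom_eq hm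
  exact ⟨t, k, rfl⟩

theorem ker_lift_eq_normalClosure {H : Type*} [Group H] {f : Fin 2 → H}
    (hrels : ∀ r ∈ lamplighterRels p, FreeGroup.lift f r = 1)
    (hinj : ∀ t (k : ℤ),
      PresentedGroup.toGroup hrels ((lampHom t).toMul * x ^ k) = 1 → t = 0 ∧ k = 0) :
    (FreeGroup.lift f).ker = Subgroup.normalClosure (lamplighterRels p) := by
  refine ((QuotientGroup.injective_lift_iff _ _ (PresentedGroup.closure_rels_subset_ker hrels)).1
    ((injective_iff_map_eq_one (PresentedGroup.toGroup hrels)).2 fun g hg => ?_)).symm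
  obtain ⟨t, k, rfl⟩ := exists_eq_lampHom_mul_zpow g
  obtain ⟨rfl, rfl⟩ := hinj t k hg
  simp

end

end PresentedLamplighter

open Polynomial in
theorem Transcendental.linearIndependent_zpow {R A : Type*} [CommRing R] [CommRing A]
    [Algebra R A] {u : Aˣ} (hu : Transcendental R (u : A)) :
    LinearIndependent R fun n : ℤ => ((u ^ n : Aˣ) : A) := by
  have heval (l : ℤ →₀ R) : Finsupp.linearCombination R (fun n : ℤ => ((u ^ n : Aˣ) : A)) l =
      LaurentPolynomial.eval₂ (algebraMap R A) u (AddMonoidAlgebra.ofCoeff l) := by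
    induction l using Finsupp.induction_linear with
    | zero => simp
    | add f g hf hg => simp [hf, hg, AddMonoidAlgebra.ofCoeff_add]
    | single n r =>
      rw [Finsupp.linearCombination_single, AddMonoidAlgebra.ofCoeff_single,
        LaurentPolynomial.single_eq_C_mul_T, LaurentPolynomial.eval₂_C_mul_T, Algebra.smul_def]
  refine linearIndependent_iff.2 fun l hl => ?_
  obtain ⟨n, f, hf⟩ := LaurentPolynomial.exists_T_pow (AddMonoidAlgebra.ofCoeff l)
  have hf0 : f = 0 := transcendental_iff.1 hu f (by
    rw [aeval_def, ← LaurentPolynomial.eval₂_toLaurent, hf, map_mul, ← heval, hl, zero_mul])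
  rw [hf0, map_zero, eq_comm, (LaurentPolynomial.isUnit_T _).mul_left_eq_zero] at hf
  exact AddMonoidAlgebra.ofCoeff_eq_zero.1 hf

namespace PowerSeries

variable {R : Type*} [CommRing R] [IsDomain R]

theorem transcendental_of_constantCoeff_eq_zero {f : R⟦X⟧} (hf : constantCoeff f = 0)
    (hf₀ : f ≠ 0) : Transcendental R f := by
  refine transcendental_iff.2 fun q hq => by_contra fun hq₀ => ?_
  obtain ⟨r, hqr, hr⟩ := q.exists_eq_pow_rootMultiplicity_mul_and_not_dvd hq₀ 0
  rw [map_zero, sub_zero, Polynomial.X_dvd_iff] at hr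
  have hr' : constantCoeff (Polynomial.aeval f r) = r.coeff 0 := by
    rw [Polynomial.aeval_def, Polynomial.hom_eval₂, hf]
    simp [Polynomial.coeff_zero_eq_eval_zero]
  rw [hqr, map_mul, map_pow, map_sub, Polynomial.aeval_X, Polynomial.aeval_C, map_zero,
    sub_zero] at hq
  exact mul_ne_zero (pow_ne_zero _ hf₀) (fun h => hr (by rw [← hr', h, map_zero])) hq

theorem transcendental_of_ne_C {f : R⟦X⟧} (hf : f ≠ C (constantCoeff f)) :
    Transcendental R f := by
  have hs := transcendental_of_constantCoeff_eq_zero (f := f - C (constantCoeff f)) (by simp)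
    (sub_ne_zero.2 hf)
  have haeval : Polynomial.aeval (f - C (constantCoeff f)) (.X + .C (constantCoeff f)) = f := by
    simp [PowerSeries.algebraMap_eq]
  simpa only [haeval] using hs.aeval (.X + .C (constantCoeff f)) (by simp) (by simp)

end PowerSeries

namespace Lamplighter

open PowerSeries

noncomputable section

def toPowerSeries : (ℕ → X3) ≃+ (ZMod 3)⟦X⟧ where
  toFun w := PowerSeries.mk fun n => ZMod.finEquiv 3 (w n)
  invFun f n := (ZMod.finEquiv 3).symm (coeff n f)
  left_inv w := by simp
  right_inv f := by ext n; simp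
  map_add' w v := by ext n; simp

@[simp]
lemma coeff_toPowerSeries (w : ℕ → X3) (n : ℕ) :
    coeff n (toPowerSeries w) = ZMod.finEquiv 3 (w n) :=
  coeff_mk _ _

@[simp]
lemma constantCoeff_toPowerSeries (w : ℕ → X3) :
    constantCoeff (toPowerSeries w) = ZMod.finEquiv 3 (w 0) := by
  rw [← coeff_zero_eq_constantCoeff_apply, coeff_toPowerSeries]

lemma finEquiv_outA (s x : X3) :
    ZMod.finEquiv 3 (outA s x) = -ZMod.finEquiv 3 x - ZMod.finEquiv 3 s := by
  revert s x; decide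

lemma finEquiv_outA_nxtA_add_finEquiv_outA (r x x' : X3) :
    ZMod.finEquiv 3 (outA (nxtA r x) x') + ZMod.finEquiv 3 (outA r x) =
      ZMod.finEquiv 3 x - ZMod.finEquiv 3 x' := by
  revert r x x'; decide

lemma one_add_X_mul_toPowerSeries_statePerm (s : X3) (w : ℕ → X3) :
    (1 + X) * toPowerSeries (statePerm nxtA outA s w) =
      (X - 1) * toPowerSeries w - C (ZMod.finEquiv 3 s) := by
  ext (_ | n)
  · simp only [add_mul, sub_mul, one_mul, map_add, map_sub, coeff_zero_X_mul, coeff_zero_C,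
      coeff_toPowerSeries, add_zero, zero_sub]
    exact finEquiv_outA s (w 0)
  · simp only [add_mul, sub_mul, one_mul, map_add, map_sub, coeff_succ_X_mul, coeff_C,
      coeff_toPowerSeries, Nat.succ_ne_zero, if_false, sub_zero]
    exact finEquiv_outA_nxtA_add_finEquiv_outA (run nxtA s w n) (w n) (w (n + 1))

lemma one_sub_X_mul_toPowerSeries_const (s : X3) :
    (1 - X) * toPowerSeries (fun _ => s) = C (ZMod.finEquiv 3 s) := by
  ext (_ | n) <;> simp [sub_mul, coeff_succ_X_mul]

def mobius : (ZMod 3)⟦X⟧ˣ :=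
  (isUnit_iff_constantCoeff.2 (by simp) : IsUnit (X - 1 : (ZMod 3)⟦X⟧)).unit *
    (isUnit_iff_constantCoeff.2 (by simp) : IsUnit (1 + X : (ZMod 3)⟦X⟧)).unit⁻¹

lemma one_add_X_mul_mobius : (1 + X) * (mobius : (ZMod 3)⟦X⟧) = X - 1 := by
  rw [mobius, Units.val_mul, mul_left_comm, IsUnit.mul_val_inv, mul_one, IsUnit.unit_spec]

lemma toPowerSeries_statePerm (s : X3) (w : ℕ → X3) :
    toPowerSeries (statePerm nxtA outA s w) = mobius * toPowerSeries ((fun _ => s) + w) := by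
  have h : (1 + X : (ZMod 3)⟦X⟧) ≠ 0 := fun h => by simpa using congrArg constantCoeff h
  refine mul_left_cancel₀ h ?_
  rw [one_add_X_mul_toPowerSeries_statePerm, ← mul_assoc, one_add_X_mul_mobius, map_add]
  linear_combination one_sub_X_mul_toPowerSeries_const s

lemma toPowerSeries_a (w : ℕ → X3) : toPowerSeries (a w) = mobius * toPowerSeries w := by
  have h := toPowerSeries_statePerm 0 w
  rwa [show (fun _ => (0 : X3)) + w = w from zero_add w] at h

lemma statePerm_eq_a_mul_addLeft (s : X3) :
    statePerm nxtA outA s = a * Equiv.addLeft (fun _ => s) :=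
  Equiv.ext fun w => toPowerSeries.injective <| by
    rw [toPowerSeries_statePerm, Equiv.Perm.mul_apply, toPowerSeries_a]
    rfl

lemma toPowerSeries_a_zpow (k : ℤ) (w : ℕ → X3) :
    toPowerSeries ((a ^ k) w) = ↑(mobius ^ k) * toPowerSeries w := by
  have ha : a = toPowerSeries.toEquiv.permCongrHom.symm (MulAction.toPermHom _ _ mobius) :=
    Equiv.ext fun w => toPowerSeries.injective <| by simp [toPowerSeries_a, Units.smul_def]
  rw [ha, ← map_zpow, ← map_zpow]
  simp [Units.smul_def]

lemma a_zpow_add (k : ℤ) (v w : ℕ → X3) : (a ^ k) (v + w) = (a ^ k) v + (a ^ k) w :=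
  toPowerSeries.injective <| by simp only [map_add, toPowerSeries_a_zpow, mul_add]

lemma a_zpow_zero (k : ℤ) : (a ^ k) 0 = 0 :=
  toPowerSeries.injective <| by simp only [map_zero, toPowerSeries_a_zpow, mul_zero]

lemma a_zpow_mul_addLeft_mul_a_zpow_neg (k : ℤ) (v : ℕ → X3) :
    a ^ k * Equiv.addLeft v * a ^ (-k) = Equiv.addLeft ((a ^ k) v) := by
  ext1 w
  rw [Equiv.Perm.mul_apply, Equiv.Perm.mul_apply, Equiv.coe_addLeft, a_zpow_add,
    ← Equiv.Perm.mul_apply (a ^ k), ← zpow_add, add_neg_cancel, zpow_zero, Equiv.Perm.one_apply]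
  rfl

lemma α_eq_addLeft : α = Equiv.addLeft (fun _ => 2) := by
  rw [α, b, statePerm_eq_a_mul_addLeft, mul_inv_rev, inv_mul_cancel_right, Equiv.neg_addLeft]
  rfl

lemma b_eq : b = a * α⁻¹ := by
  rw [α, mul_inv_rev, inv_inv, mul_inv_cancel_left]

lemma c_eq : c = a * α := by
  rw [c, statePerm_eq_a_mul_addLeft, α_eq_addLeft]

lemma range_lift : (FreeGroup.lift ![a, α]).range = GA := by
  rw [FreeGroup.range_lift_eq_closure, Matrix.range_cons_cons_empty, GA]
  refine le_antisymm ((Subgroup.closure_le _).2 ?_) ((Subgroup.closure_le _).2 ?_)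
  · have ha : a ∈ Subgroup.closure {a, b, c} := Subgroup.subset_closure (by simp)
    have hb : b ∈ Subgroup.closure {a, b, c} := Subgroup.subset_closure (by simp)
    rw [Set.insert_subset_iff, Set.singleton_subset_iff]
    exact ⟨ha, Subgroup.mul_mem _ (Subgroup.inv_mem _ hb) ha⟩
  · have ha : a ∈ Subgroup.closure {a, α} := Subgroup.subset_closure (by simp)
    have hα : α ∈ Subgroup.closure {a, α} := Subgroup.subset_closure (by simp)
    rw [Set.insert_subset_iff, Set.insert_subset_iff, Set.singleton_subset_iff, b_eq, c_eq]
    exact ⟨ha, Subgroup.mul_mem _ ha (Subgroup.inv_mem _ hα), Subgroup.mul_mem _ ha hα⟩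

lemma transcendental_mobius : Transcendental (ZMod 3) (mobius : (ZMod 3)⟦X⟧) := by
  refine transcendental_of_ne_C fun h => ?_
  have h₁ := one_add_X_mul_mobius
  rw [h] at h₁
  have hc₀ : constantCoeff (mobius : (ZMod 3)⟦X⟧) = -1 := by simpa using congrArg (coeff 0) h₁
  have hc₁ : constantCoeff (mobius : (ZMod 3)⟦X⟧) = 1 := by simpa using congrArg (coeff 1) h₁
  exact absurd (hc₀.symm.trans hc₁) (by decide)

lemma eq_zero_of_a_zpow_eq_one {k : ℤ} (h : a ^ k = 1) : k = 0 := by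
  have h₁ : ((mobius ^ k : (ZMod 3)⟦X⟧ˣ) : (ZMod 3)⟦X⟧) = ↑(mobius ^ (0 : ℤ)) := by
    simpa [h] using (toPowerSeries_a_zpow k (toPowerSeries.symm 1)).symm
  exact transcendental_mobius.linearIndependent_zpow.injective h₁

def lampVector (n : ℤ) : ℕ → X3 := (a ^ (-n)) fun _ => 2

lemma linearIndependent_toPowerSeries_lampVector :
    LinearIndependent (ZMod 3) (toPowerSeries ∘ lampVector) := by
  have hc : toPowerSeries (fun _ => (2 : X3)) ≠ 0 := fun h => by
    simpa using congrArg constantCoeff h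
  have hv : toPowerSeries ∘ lampVector =
      fun n => ↑(mobius ^ (-n)) * toPowerSeries fun _ => 2 :=
    funext fun n => toPowerSeries_a_zpow _ _
  rw [hv]
  exact (transcendental_mobius.linearIndependent_zpow.comp Neg.neg neg_injective).map'
    (LinearMap.mulRight (ZMod 3) (toPowerSeries fun _ => 2))
    (LinearMap.ker_eq_bot_of_injective (mul_left_injective₀ hc))

lemma lamp_a_α (n : ℤ) : lamp a α n = Equiv.addLeft (lampVector n) := by
  have h := a_zpow_mul_addLeft_mul_a_zpow_neg (-n) fun _ => 2
  rw [neg_neg, ← α_eq_addLeft] at h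
  exact h

lemma α_pow_three : α ^ 3 = 1 := by
  rw [α_eq_addLeft, Equiv.nsmul_addLeft, ← Equiv.addLeft_zero]
  rfl

lemma commute_addLeft (v w : ℕ → X3) : Commute (Equiv.addLeft v) (Equiv.addLeft w) := by
  rw [Commute, SemiconjBy, ← Equiv.addLeft_add, ← Equiv.addLeft_add, add_comm]

lemma lift_eq_one_of_mem_lamplighterRels :
    ∀ r ∈ lamplighterRels 3, FreeGroup.lift ![a, α] r = 1 := by
  rintro r (rfl | ⟨n, m, rfl⟩)
  · rw [map_pow, FreeGroup.lift_apply_of]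
    exact α_pow_three
  · rw [map_commutatorElement, map_lamp, map_lamp, commutatorElement_eq_one_iff_commute]
    simpa [lamp_a_α] using commute_addLeft (lampVector n) (lampVector m)

lemma toGroup_lampHom (t : ℤ →₀ ZMod 3) :
    ∃ v, PresentedGroup.toGroup lift_eq_one_of_mem_lamplighterRels
        (PresentedLamplighter.lampHom t).toMul = Equiv.addLeft v ∧
      toPowerSeries v = Finsupp.linearCombination (ZMod 3) (toPowerSeries ∘ lampVector) t := by
  induction t using Finsupp.induction_linear with
  | zero => exact ⟨0, by simp⟩
  | add t s ht hs =>
    obtain ⟨v, hv, hvt⟩ := ht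
    obtain ⟨w, hw, hws⟩ := hs
    exact ⟨v + w, by simp [hv, hw, Equiv.addLeft_add], by simp [hvt, hws]⟩
  | single n e =>
    obtain ⟨k, rfl⟩ := ZMod.intCast_surjective e
    refine ⟨k • lampVector n, ?_, by simp [Int.cast_smul_eq_zsmul]⟩
    rw [PresentedLamplighter.lampHom_single, map_zpow, map_lamp]
    simp [PresentedLamplighter.x, PresentedLamplighter.y, lamp_a_α]

lemma ker_lift : (FreeGroup.lift ![a, α]).ker = Subgroup.normalClosure (lamplighterRels 3) := by
  refine PresentedLamplighter.ker_lift_eq_normalClosure lift_eq_one_of_mem_lamplighterRels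
    fun t k h => ?_
  obtain ⟨v, hv, hvt⟩ := toGroup_lampHom t
  rw [map_mul, hv, map_zpow] at h
  simp only [PresentedLamplighter.x, PresentedGroup.toGroup.of] at h
  have hv₀ : v = 0 := by simpa [a_zpow_zero] using congrArg (fun g => g 0) h
  refine ⟨linearIndependent_iff.1 linearIndependent_toPowerSeries_lampVector t ?_,
    eq_zero_of_a_zpow_eq_one ?_⟩
  · rw [← hvt, hv₀, map_zero]
  · simpa [hv₀] using h

end

/-- `G_A` admits the presentation
`⟨x, y ∣ y³, [x⁻ⁿyxⁿ, x⁻ᵐyxᵐ] (n, m ∈ ℤ)⟩`: the homomorphism from the free group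
on two generators sending `x ↦ a`, `y ↦ α` has range `G_A`, and its kernel is the
normal closure of `{y³} ∪ {[x⁻ⁿyxⁿ, x⁻ᵐyxᵐ] : n, m ∈ ℤ}`. -/
theorem GA_presentation :
    (FreeGroup.lift (![a, α] : Fin 2 → Equiv.Perm (ℕ → X3))).range = GA ∧
    (FreeGroup.lift (![a, α] : Fin 2 → Equiv.Perm (ℕ → X3))).ker =
      Subgroup.normalClosure
        {w : FreeGroup (Fin 2) |
          w = (FreeGroup.of (1 : Fin 2)) ^ 3 ∨
          ∃ n m : ℤ,
            w = ⁅(FreeGroup.of (0 : Fin 2)) ^ (-n) * FreeGroup.of (1 : Fin 2) *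
                  (FreeGroup.of (0 : Fin 2)) ^ n,
                 (FreeGroup.of (0 : Fin 2)) ^ (-m) * FreeGroup.of (1 : Fin 2) *
                  (FreeGroup.of (0 : Fin 2)) ^ m⁆} :=
  ⟨range_lift, ker_lift⟩

end Lamplighter
end

section
/- For every point w ∈ X^ℕ, the stabilizer St_{G_A}(w) = {g ∈ G_A : g(w) = w} is a cyclic group, i.e., it is generated by a single element. -/
/-!
With `X = ℤ/3`, the automaton reads `x` in state `s` by outputting `-x - s` and moving to
`x - s`. So the state `a = 0` acts on `X^ℕ` as an additive automorphism, and every state `s`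
acts as `a` followed by the translation by `s 0`, the image of the zero sequence. Hence `a`
normalises the group `T` of translations of `X^ℕ` and `G_A ≤ ⟨a⟩T`, in which `T` is normal
with cyclic quotient. Translations act freely, so the stabilizer of a point meets `T`
trivially and embeds into the cyclic group `⟨a⟩T / T`.
-/

open Subgroup
open scoped Pointwise

theorem isCyclic_of_le_zpowers_sup_of_disjoint {G : Type*} [Group G] {t : G} {T S : Subgroup G}
    (ht : t ∈ normalizer (T : Set G)) (hS : S ≤ zpowers t ⊔ T) (hST : Disjoint S T) :
    IsCyclic S := by
  have hle : zpowers t ≤ normalizer (T : Set G) := zpowers_le.mpr ht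
  have := normal_subgroupOf_sup_of_le_normalizer hle
  let π := QuotientGroup.mk' (T.subgroupOf (zpowers t ⊔ T))
  have hπ : Function.Surjective (π.comp (inclusion (le_sup_left (b := T)))) := by
    rintro ⟨⟨g, hg⟩⟩
    obtain ⟨p, hp, u, hu, rfl⟩ : g ∈ (zpowers t : Set G) * (T : Set G) := by
      rwa [← coe_mul_of_left_le_normalizer_right _ _ hle]
    refine ⟨⟨p, hp⟩, (QuotientGroup.eq (s := T.subgroupOf _)).mpr ?_⟩
    simpa [mem_subgroupOf] using hu
  have := isCyclic_of_surjective _ hπ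
  refine isCyclic_of_injective (π.comp (inclusion hS)) fun x y hxy => ?_
  have hmem : (x : G)⁻¹ * y ∈ S ⊓ T :=
    mem_inf.mpr ⟨mul_mem (inv_mem x.2) y.2,
      by simpa [mem_subgroupOf] using QuotientGroup.eq.mp hxy⟩
  rw [hST.eq_bot, mem_bot] at hmem
  exact Subtype.ext (inv_mul_eq_one.mp hmem)

section Translations

variable (A : Type*) [AddGroup A]

def translations : Subgroup (Equiv.Perm A) where
  carrier := Set.range Equiv.addLeft
  one_mem' := ⟨0, Equiv.addLeft_zero⟩
  mul_mem' := by
    rintro _ _ ⟨x, rfl⟩ ⟨y, rfl⟩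
    exact ⟨x + y, Equiv.addLeft_add x y⟩
  inv_mem' := by
    rintro _ ⟨x, rfl⟩
    exact ⟨-x, (Equiv.neg_addLeft x).symm⟩

variable {A}

theorem disjoint_stabilizer_translations (x : A) :
    Disjoint (MulAction.stabilizer (Equiv.Perm A) x) (translations A) := by
  rw [disjoint_def]
  rintro _ hx ⟨c, rfl⟩
  have hc : c + x = x := hx
  rw [add_eq_right.mp hc, Equiv.addLeft_zero]

theorem mul_addLeft_mul_inv_of_map_add {g : Equiv.Perm A} (hg : ∀ x y, g (x + y) = g x + g y)
    (c : A) : g * Equiv.addLeft c * g⁻¹ = Equiv.addLeft (g c) := by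
  ext x
  simp [hg]

theorem mem_normalizer_translations_of_map_add {g : Equiv.Perm A}
    (hg : ∀ x y, g (x + y) = g x + g y) :
    g ∈ normalizer (translations A : Set (Equiv.Perm A)) := by
  have hg' : ∀ x y, g⁻¹ (x + y) = g⁻¹ x + g⁻¹ y := (AddEquiv.mk' g hg).symm.map_add
  refine mem_normalizer_iff.mpr fun h => ⟨?_, ?_⟩
  · rintro ⟨c, rfl⟩
    exact ⟨g c, (mul_addLeft_mul_inv_of_map_add hg c).symm⟩
  · rintro ⟨d, hd⟩
    refine ⟨g⁻¹ d, ?_⟩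
    rw [← mul_addLeft_mul_inv_of_map_add hg' d, hd]
    group

end Translations

namespace Lamplighter

open Fin.CommRing

lemma nxtA_eq_s17 : ∀ s x : Fin 3, nxtA s x = x - s := by decide

lemma outA_eq_s17 : ∀ s x : Fin 3, outA s x = -x - s := by decide

lemma run_nxtA_add_s17 (s : Fin 3) (v w : ℕ → X3) (n : ℕ) :
    run nxtA s (v + w) n = run nxtA s v n + run nxtA 0 w n := by
  induction n with
  | zero => exact (add_zero s).symm
  | succ n ih =>
    simp only [run, nxtA_eq_s17, ih, Pi.add_apply]
    ring

lemma statePerm_add (s : Fin 3) (v w : ℕ → X3) :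
    statePerm nxtA outA s (v + w) = statePerm nxtA outA s v + a w := by
  funext n
  change outA _ _ = outA _ _ + outA _ _
  simp only [outA_eq_s17, run_nxtA_add_s17, Pi.add_apply]
  ring

lemma a_add (v w : ℕ → X3) : a (v + w) = a v + a w := statePerm_add 0 v w

lemma statePerm_eq_addLeft_mul_a (s : Fin 3) :
    statePerm nxtA outA s = Equiv.addLeft (statePerm nxtA outA s 0) * a := by
  ext1 w
  simpa using statePerm_add s 0 w

lemma GA_le_zpowers_a_sup_translations : GA ≤ zpowers a ⊔ translations (ℕ → X3) := by
  have hstate (s : Fin 3) : statePerm nxtA outA s ∈ zpowers a ⊔ translations (ℕ → X3) := by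
    rw [statePerm_eq_addLeft_mul_a]
    exact mul_mem (mem_sup_right ⟨_, rfl⟩) (mem_sup_left (mem_zpowers a))
  rw [GA, closure_le]
  rintro _ (rfl | rfl | rfl) <;> exact hstate _

/-- For every point `w ∈ X^ℕ`, the stabilizer
`St_{G_A}(w) = {g ∈ G_A : g(w) = w}` is a cyclic group: it contains an element
`g₀` of which every element of the stabilizer is an integer power. -/
theorem stabilizer_cyclic :
    ∀ w : ℕ → X3, ∃ g₀, g₀ ∈ GA ∧ g₀ w = w ∧
      ∀ h ∈ GA, h w = w → ∃ k : ℤ, h = g₀ ^ k := by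
  intro w
  obtain ⟨⟨g₀, hg₀GA, hg₀w⟩, hg₀⟩ : IsCyclic ↥(GA ⊓ MulAction.stabilizer _ w) :=
    isCyclic_of_le_zpowers_sup_of_disjoint (mem_normalizer_translations_of_map_add a_add)
      (inf_le_left.trans GA_le_zpowers_a_sup_translations)
      ((disjoint_stabilizer_translations w).mono_left inf_le_right)
  refine ⟨g₀, hg₀GA, hg₀w, fun h hGA hw => ?_⟩
  obtain ⟨k, hk⟩ := hg₀ ⟨h, hGA, hw⟩
  exact ⟨k, congrArg Subtype.val hk.symm⟩

end Lamplighter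
end
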